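/- arXiv:1509.04696 — 3 statements merged into one kernel-verified Lean document; each statement's English description precedes it below -/
import Mathlib

section
/- Let T be an isometric subtree of a connected graph G, let c be a vertex of T, and let r be any vertex of G. If v1 and v2 are vertices of T − {c} such that d_G(r, v1) < d_G(c, v1) and d_G(r, v2) < d_G(c, v2), then v1 and v2 belong to the same connected component of T − {c}; that is, all vertices of T that are strictly closer to r than to c lie in a single component of T − {c}. -/
private lemma aux_reach {V : Type*} {G : SimpleGraph V} {H : G.Subgraph} {c : V} :
    ∀ {a b : H.verts} (p : H.coe.Walk a b),
      (∀ x ∈ p.support, (x : V) ≠ c) →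
      ∀ (ha : (a : V) ∈ (H.deleteVerts {c}).verts) (hb : (b : V) ∈ (H.deleteVerts {c}).verts),
      (H.deleteVerts {c}).coe.Reachable ⟨a, ha⟩ ⟨b, hb⟩ := by
  intro a b p
  induction p with
  | nil => intro _ ha hb; rfl
  | @cons u w x h q ih =>
    intro hs ha hb
    have hw : (w : V) ≠ c := hs w (by simp)
    have hwmem : (w : V) ∈ (H.deleteVerts {c}).verts := by
      simp only [SimpleGraph.Subgraph.deleteVerts_verts, Set.mem_diff, Set.mem_singleton_iff]
      exact ⟨w.2, hw⟩
    have hadj : (H.deleteVerts {c}).coe.Adj ⟨u, ha⟩ ⟨w, hwmem⟩ := by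
      simp only [SimpleGraph.Subgraph.coe_adj, SimpleGraph.Subgraph.deleteVerts_adj]
      refine ⟨(ha : (u:V) ∈ H.verts \ {c}).1, ?_, hwmem.1, ?_, h⟩
      · exact (ha : (u:V) ∈ H.verts \ {c}).2
      · simpa using hw
    exact (hadj.reachable).trans (ih (fun x hx => hs x (by simp [hx])) hwmem hb)

/-- let `T` (a subgraph `H` of a connected graph `G`) be an isometric
subtree, let `c` be a vertex of `T` and `r` any vertex of `G`.  If `v1, v2` are vertices
of `T − {c}` which are both strictly closer to `r` than to `c`, then `v1` and `v2` lie in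
the same component of `T − {c}`. -/
theorem stmt10 {V : Type*} (G : SimpleGraph V) (hG : G.Connected)
    (H : G.Subgraph) (htree : H.coe.IsTree)
    (hiso : ∀ u v : H.verts, H.coe.dist u v = G.dist u v)
    (c : V) (hc : c ∈ H.verts) (r : V)
    (v1 v2 : V) (hv1 : v1 ∈ H.verts) (hv2 : v2 ∈ H.verts)
    (hv1c : v1 ∉ ({c} : Set V)) (hv2c : v2 ∉ ({c} : Set V))
    (hd1 : G.dist r v1 < G.dist c v1) (hd2 : G.dist r v2 < G.dist c v2) :
    (H.deleteVerts {c}).coe.Reachable ⟨v1, ⟨hv1, hv1c⟩⟩ ⟨v2, ⟨hv2, hv2c⟩⟩ := by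
  classical
  set a : H.verts := ⟨v1, hv1⟩
  set b : H.verts := ⟨v2, hv2⟩
  set cc : H.verts := ⟨c, hc⟩
  have hreach : H.coe.Reachable a b := htree.isConnected.1 a b
  obtain ⟨p, hp⟩ := hreach.exists_walk_length_eq_dist
  by_cases hcp : cc ∈ p.support
  · -- contradiction
    exfalso
    have hsplit := congr_arg SimpleGraph.Walk.length (p.take_spec hcp)
    rw [SimpleGraph.Walk.length_append] at hsplit
    have h1 : H.coe.dist a cc ≤ (p.takeUntil cc hcp).length := SimpleGraph.dist_le _
    have h2 : H.coe.dist cc b ≤ (p.dropUntil cc hcp).length := SimpleGraph.dist_le _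
    have hge : H.coe.dist a cc + H.coe.dist cc b ≤ H.coe.dist a b := by omega
    have e1 : H.coe.dist a cc = G.dist v1 c := hiso a cc
    have e2 : H.coe.dist cc b = G.dist c v2 := hiso cc b
    have e3 : H.coe.dist a b = G.dist v1 v2 := hiso a b
    rw [e1, e2, e3] at hge
    have htri : G.dist v1 v2 ≤ G.dist v1 r + G.dist r v2 := hG.dist_triangle
    rw [SimpleGraph.dist_comm (G:=G) (u:=v1) (v:=r)] at htri
    rw [SimpleGraph.dist_comm (G:=G) (u:=v1) (v:=c)] at hge
    omega
  · have hs : ∀ x ∈ p.support, (x : V) ≠ c := by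
      intro x hx hxc
      apply hcp
      have : x = cc := Subtype.ext hxc
      rwa [this] at hx
    exact aux_reach p hs ⟨hv1, hv1c⟩ ⟨hv2, hv2c⟩
end

section
/- Let T be an isometric subtree of a connected graph G, let c0 be a vertex of T, let r be a vertex of G, and let v0 be a vertex of T with d_G(c0, v0) > d_G(r, v0). Let c1 be the unique vertex of T adjacent to c0 with d_G(c1, v0) = d_G(c0, v0) − 1 (the neighbor of c0 in T toward v0). Then for every vertex v of T belonging to a different connected component of T − {c0} than v0, one has d_G(c1, v) ≤ d_G(r, v). -/
private lemma aux_reach_s11 {V : Type*} {G : SimpleGraph V} {H : G.Subgraph} {s : Set V}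
    {u w : H.verts} (p : H.coe.Walk u w) (h : ∀ x ∈ p.support, (x : V) ∉ s) :
    (H.deleteVerts s).coe.Reachable ⟨u, u.2, h u p.start_mem_support⟩
      ⟨w, w.2, h w p.end_mem_support⟩ := by
  induction p with
  | nil => exact SimpleGraph.Reachable.refl _
  | @cons a b c ha p ih =>
    have h' : ∀ x ∈ p.support, (x : V) ∉ s := fun x hx => h x (List.mem_cons_of_mem _ hx)
    refine SimpleGraph.Reachable.trans (SimpleGraph.Adj.reachable ?_) (ih h')
    show (H.deleteVerts s).Adj a b
    rw [SimpleGraph.Subgraph.deleteVerts_adj]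
    exact ⟨a.2, h a (by simp), b.2, h' b p.start_mem_support, ha⟩

/-- let `T` (a subgraph `H` of a connected graph `G`) be an isometric
subtree, `c0` a vertex of `T`, `r` a vertex of `G`, and `v0` a vertex of `T` with
`d_G(c0,v0) > d_G(r,v0)`.  Let `c1` be the (unique) vertex of `T` adjacent to `c0` with
`d_G(c1,v0) = d_G(c0,v0) − 1` (the neighbor of `c0` in `T` toward `v0`).  Then every
vertex `v` of `T` lying in a different component of `T − {c0}` than `v0` satisfies
`d_G(c1,v) ≤ d_G(r,v)`. -/
theorem stmt11 {V : Type*} (G : SimpleGraph V) (hG : G.Connected)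
    (H : G.Subgraph) (htree : H.coe.IsTree)
    (hiso : ∀ u v : H.verts, H.coe.dist u v = G.dist u v)
    (c0 : V) (hc0 : c0 ∈ H.verts) (r : V)
    (v0 : V) (hv0 : v0 ∈ H.verts) (hd0 : G.dist r v0 < G.dist c0 v0)
    (c1 : V) (hc1 : c1 ∈ H.verts) (hadj : H.Adj c0 c1)
    (hc1v0 : G.dist c1 v0 + 1 = G.dist c0 v0)
    (hv0c : v0 ∉ ({c0} : Set V))
    (v : V) (hv : v ∈ H.verts) (hvc : v ∉ ({c0} : Set V))
    (hcomp : ¬ ((H.deleteVerts {c0}).coe.Reachable ⟨v, ⟨hv, hvc⟩⟩ ⟨v0, ⟨hv0, hv0c⟩⟩)) :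
    G.dist c1 v ≤ G.dist r v := by
  classical
  set vv : H.verts := ⟨v, hv⟩
  set vv0 : H.verts := ⟨v0, hv0⟩
  set cc0 : H.verts := ⟨c0, hc0⟩
  -- a shortest walk in H.coe from v to v0
  obtain ⟨p, hp⟩ := (htree.isConnected vv vv0).exists_walk_length_eq_dist
  -- it must pass through c0
  have hmem : cc0 ∈ p.support := by
    by_contra hne
    apply hcomp
    have havoid : ∀ x ∈ p.support, (x : V) ∉ ({c0} : Set V) := by
      intro x hx hxs
      apply hne
      have : x = cc0 := Subtype.ext (by simpa using hxs)
      exact this ▸ hx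
    exact aux_reach_s11 p havoid
  -- so d_T(v,v0) ≥ d_T(v,c0) + d_T(c0,v0); with the triangle ineq it's equality
  have hsplit : H.coe.dist vv cc0 + H.coe.dist cc0 vv0 ≤ H.coe.dist vv vv0 := by
    have h1 := SimpleGraph.dist_le (p.takeUntil cc0 hmem)
    have h2 := SimpleGraph.dist_le (p.dropUntil cc0 hmem)
    have hlen : (p.takeUntil cc0 hmem).length + (p.dropUntil cc0 hmem).length = p.length := by
      rw [← SimpleGraph.Walk.length_append, SimpleGraph.Walk.take_spec]
    omega
  -- translate to G via the isometry
  have e1 : H.coe.dist vv cc0 = G.dist v c0 := hiso vv cc0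
  have e2 : H.coe.dist cc0 vv0 = G.dist c0 v0 := hiso cc0 vv0
  have e3 : H.coe.dist vv vv0 = G.dist v v0 := hiso vv vv0
  have key : G.dist v c0 + G.dist c0 v0 ≤ G.dist v v0 := by omega
  -- triangle inequalities in G
  have t1 : G.dist v v0 ≤ G.dist v r + G.dist r v0 := hG.dist_triangle
  have t2 : G.dist c1 v ≤ G.dist c1 c0 + G.dist c0 v := hG.dist_triangle
  have hA : G.dist c1 c0 ≤ 1 := by
    have : G.Adj c1 c0 := (H.adj_sub hadj).symm
    rw [SimpleGraph.dist_eq_one_iff_adj.mpr this]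
  have hcomm1 : G.dist c0 v = G.dist v c0 := SimpleGraph.dist_comm
  have hcomm2 : G.dist r v = G.dist v r := SimpleGraph.dist_comm
  omega
end

section
/- In the infinite generalized Petersen graph GP(∞,3), the subgraph induced on the six vertices {a_1, a_2, a_3, b_1, b_2, b_3} is a tree (its edges are (a_1,a_2), (a_2,a_3), (a_1,b_1), (a_2,b_2), (a_3,b_3)), and this subgraph is isometric in GP(∞,3): for any two of these six vertices, their distance in the induced subgraph equals their distance in GP(∞,3). -/
/-!
The six vertices span the caterpillar `a₁ — a₂ — a₃` with pendant edges `aᵢ — bᵢ`; it contains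
no inner edge `bᵢ — bᵢ₊₃`, so it embeds in the comb `GP(∞,0)`, where every edge is a bridge.

Each distance in the caterpillar is realized by a walk, and the matching lower bound in
`GP(∞,3)` comes from distinctness and non-adjacency for distances 1 and 2, and otherwise from
bipartiteness: colour `aᵢ` by the parity of `i` and `bᵢ` by the opposite parity, which is a proper
colouring because 3 is odd. Pairs at distance 3 in the caterpillar have different colours and are
not adjacent, so they are at odd distance at least 3; `b₁` and `b₃` have the same colour and no
common neighbour, so they are at even distance greater than 2.
-/

/-- Edge relation generating the infinite generalized Petersen graph `GP(∞,k)` on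
vertex set `ℤ ⊕ ℤ`, where `Sum.inl i` is `a_i` and `Sum.inr i` is `b_i`. -/
def GPinfRel (k : ℕ) : (ℤ ⊕ ℤ) → (ℤ ⊕ ℤ) → Prop
  | Sum.inl i, Sum.inl i' => i' = i + 1
  | Sum.inl i, Sum.inr i' => i' = i
  | Sum.inr _, Sum.inl _ => False
  | Sum.inr i, Sum.inr i' => i' = i + (k : ℤ)

/-- The infinite generalized Petersen graph `GP(∞,k)`. -/
def GPinf (k : ℕ) : SimpleGraph (ℤ ⊕ ℤ) := SimpleGraph.fromRel (GPinfRel k)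

namespace SimpleGraph

variable {V : Type*} {G : SimpleGraph V} {u v : V}

lemma Reachable.iff_of_forall_adj {P : V → Prop} (hP : ∀ ⦃x y⦄, G.Adj x y → (P x ↔ P y))
    (h : G.Reachable u v) : P u ↔ P v := by
  obtain ⟨p⟩ := h
  induction p with
  | nil => rfl
  | cons hxy _ ih => exact (hP hxy).trans ih

lemma isBridge_of_separates (P : V → Prop) (hu : P u) (hv : ¬P v)
    (hP : ∀ ⦃x y⦄, G.Adj x y → s(x, y) ≠ s(u, v) → (P x ↔ P y)) : G.IsBridge s(u, v) := by
  rw [isBridge_iff]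
  refine fun h ↦ hv ((h.iff_of_forall_adj fun x y hxy ↦ ?_).mp hu)
  rw [deleteEdges_adj, Set.mem_singleton_iff] at hxy
  exact hP hxy.1 hxy.2

lemma Reachable.three_le_dist_of_color_ne (c : G.Coloring Bool) (hr : G.Reachable u v)
    (hc : c u ≠ c v) (hadj : ¬G.Adj u v) : 3 ≤ G.dist u v := by
  obtain ⟨p, hp⟩ := hr.exists_walk_length_eq_dist
  have hodd : Odd p.length :=
    (c.odd_length_iff_not_congr p).mpr (by simpa [Bool.eq_not_iff] using hc)
  have hne : G.dist u v ≠ 1 := mt dist_eq_one_iff_adj.mp hadj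
  rw [Nat.odd_iff, hp] at hodd
  omega

lemma Reachable.four_le_dist_of_color_eq (c : G.Coloring Bool) (hr : G.Reachable u v)
    (hne : u ≠ v) (hc : c u = c v) (hcommon : G.commonNeighbors u v = ∅) : 4 ≤ G.dist u v := by
  obtain ⟨p, hp⟩ := hr.exists_walk_length_eq_dist
  have heven : Even p.length := (c.even_length_iff_congr p).mpr (by simp [hc])
  have hadj : ¬G.Adj u v := fun h ↦ c.valid h hc
  have htwo : 2 < G.dist u v := by
    have := two_lt_edist_iff.mpr ⟨hne, hadj, hcommon⟩
    rwa [← hr.coe_dist_eq_edist, Nat.ofNat_lt_cast] at this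
  rw [Nat.even_iff, hp] at heven
  omega

lemma dist_le_induce_dist {s : Set V} {u v : s} (h : (G.induce s).Reachable u v) :
    G.dist u v ≤ (G.induce s).dist u v := by
  obtain ⟨p, hp⟩ := h.exists_walk_length_eq_dist
  rw [← hp, ← p.length_map (Embedding.induce s).toHom]
  exact dist_le _

lemma induce_dist_eq_of_walk {s : Set V} {u v : s} (p : (G.induce s).Walk u v)
    (hp : p.length ≤ G.dist u v) : (G.induce s).dist u v = G.dist u v :=
  le_antisymm ((dist_le p).trans hp) (dist_le_induce_dist ⟨p⟩)

end SimpleGraph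

namespace GPinf

open SimpleGraph

variable {k : ℕ} {i j : ℤ}

@[simp] lemma adj_inl_inl : (GPinf k).Adj (.inl i) (.inl j) ↔ j = i + 1 ∨ i = j + 1 := by
  simp [GPinf, GPinfRel]; omega

@[simp] lemma adj_inl_inr : (GPinf k).Adj (.inl i) (.inr j) ↔ i = j := by
  simp [GPinf, GPinfRel]; omega

@[simp] lemma adj_inr_inl : (GPinf k).Adj (.inr i) (.inl j) ↔ i = j := by
  simp [GPinf, GPinfRel]

@[simp] lemma adj_inr_inr :
    (GPinf k).Adj (.inr i) (.inr j) ↔ i ≠ j ∧ (j = i + k ∨ i = j + k) := by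
  simp [GPinf, GPinfRel]

def bicoloring (hk : Odd k) : (GPinf k).Coloring Bool :=
  Coloring.mk (Sum.elim (fun i ↦ decide (i % 2 = 0)) (fun i ↦ decide (i % 2 = 1))) <| by
    obtain ⟨m, rfl⟩ := hk
    rintro (i | i) (j | j) h <;> simp at h ⊢ <;> omega

/-- `GPinf 0` is the comb: its inner relation `bᵢ ~ bᵢ₊₀` only produces loops, which
`fromRel` discards. -/
theorem isAcyclic_zero : (GPinf 0).IsAcyclic := by
  have outer (i : ℤ) : (GPinf 0).IsBridge s(.inl i, .inl (i + 1)) :=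
    isBridge_of_separates (fun z ↦ Sum.elim id id z ≤ i) (by simp) (by simp) <| by
      rintro (j | j) (j' | j') h hne <;> simp at h hne ⊢ <;> omega
  have spoke (i : ℤ) : (GPinf 0).IsBridge s(.inl i, .inr i) :=
    isBridge_of_separates (· ≠ .inr i) (by simp) (by simp) <| by
      rintro (j | j) (j' | j') h hne <;> simp at h hne ⊢ <;> omega
  rw [isAcyclic_iff_forall_adj_isBridge]
  rintro (i | i) (j | j) h <;>
    simp only [adj_inl_inl, adj_inl_inr, adj_inr_inl, adj_inr_inr] at h
  · rcases h with rfl | rfl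
    · exact outer i
    · rw [Sym2.eq_swap]; exact outer j
  · subst h; exact spoke i
  · subst h; rw [Sym2.eq_swap]; exact spoke i
  · exfalso; omega

end GPinf

def threeSpokes : Set (ℤ ⊕ ℤ) := {.inl 1, .inl 2, .inl 3, .inr 1, .inr 2, .inr 3}

namespace ThreeSpokes

open SimpleGraph

abbrev graph : SimpleGraph threeSpokes := (GPinf 3).induce threeSpokes

def a₁ : threeSpokes := ⟨.inl 1, by simp [threeSpokes]⟩
def a₂ : threeSpokes := ⟨.inl 2, by simp [threeSpokes]⟩
def a₃ : threeSpokes := ⟨.inl 3, by simp [threeSpokes]⟩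
def b₁ : threeSpokes := ⟨.inr 1, by simp [threeSpokes]⟩
def b₂ : threeSpokes := ⟨.inr 2, by simp [threeSpokes]⟩
def b₃ : threeSpokes := ⟨.inr 3, by simp [threeSpokes]⟩

lemma eq_or (u : threeSpokes) : u = a₁ ∨ u = a₂ ∨ u = a₃ ∨ u = b₁ ∨ u = b₂ ∨ u = b₃ := by
  obtain ⟨x, hx⟩ := u
  simp only [threeSpokes, Set.mem_insert_iff, Set.mem_singleton_iff] at hx
  rcases hx with rfl | rfl | rfl | rfl | rfl | rfl <;> simp [a₁, a₂, a₃, b₁, b₂, b₃]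

lemma adj_a₁_a₂ : graph.Adj a₁ a₂ := by simp [a₁, a₂]
lemma adj_a₂_a₃ : graph.Adj a₂ a₃ := by simp [a₂, a₃]
lemma adj_a₁_b₁ : graph.Adj a₁ b₁ := by simp [a₁, b₁]
lemma adj_a₂_b₂ : graph.Adj a₂ b₂ := by simp [a₂, b₂]
lemma adj_a₃_b₃ : graph.Adj a₃ b₃ := by simp [a₃, b₃]

theorem connected : graph.Connected := by
  refine (connected_iff_exists_forall_reachable _).mpr ⟨a₂, fun u ↦ ?_⟩
  rcases eq_or u with rfl | rfl | rfl | rfl | rfl | rfl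
  · exact adj_a₁_a₂.reachable.symm
  · rfl
  · exact adj_a₂_a₃.reachable
  · exact adj_a₁_a₂.reachable.symm.trans adj_a₁_b₁.reachable
  · exact adj_a₂_b₂.reachable
  · exact adj_a₂_a₃.reachable.trans adj_a₃_b₃.reachable

theorem isAcyclic : graph.IsAcyclic := by
  refine GPinf.isAcyclic_zero.comap ⟨Subtype.val, fun {x y} h ↦ ?_⟩ Subtype.val_injective
  rw [induce_adj] at h
  rcases x with ⟨i | i, hx⟩ <;> rcases y with ⟨j | j, hy⟩ <;>
    simp [threeSpokes] at hx hy h ⊢ <;> omega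

lemma reachable (u v : threeSpokes) : (GPinf 3).Reachable u v :=
  (connected.preconnected u v).map (Embedding.induce threeSpokes).toHom

lemma dist_a₁_a₂ : graph.dist a₁ a₂ = (GPinf 3).dist a₁ a₂ :=
  induce_dist_eq_of_walk adj_a₁_a₂.toWalk ((reachable _ _).pos_dist_of_ne (by simp [a₁, a₂]))

lemma dist_a₂_a₃ : graph.dist a₂ a₃ = (GPinf 3).dist a₂ a₃ :=
  induce_dist_eq_of_walk adj_a₂_a₃.toWalk ((reachable _ _).pos_dist_of_ne (by simp [a₂, a₃]))

lemma dist_a₁_b₁ : graph.dist a₁ b₁ = (GPinf 3).dist a₁ b₁ :=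
  induce_dist_eq_of_walk adj_a₁_b₁.toWalk ((reachable _ _).pos_dist_of_ne (by simp [a₁, b₁]))

lemma dist_a₂_b₂ : graph.dist a₂ b₂ = (GPinf 3).dist a₂ b₂ :=
  induce_dist_eq_of_walk adj_a₂_b₂.toWalk ((reachable _ _).pos_dist_of_ne (by simp [a₂, b₂]))

lemma dist_a₃_b₃ : graph.dist a₃ b₃ = (GPinf 3).dist a₃ b₃ :=
  induce_dist_eq_of_walk adj_a₃_b₃.toWalk ((reachable _ _).pos_dist_of_ne (by simp [a₃, b₃]))

lemma dist_a₁_a₃ : graph.dist a₁ a₃ = (GPinf 3).dist a₁ a₃ :=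
  induce_dist_eq_of_walk (.cons adj_a₁_a₂ adj_a₂_a₃.toWalk)
    ((reachable _ _).one_lt_dist_of_ne_of_not_adj (by simp [a₁, a₃]) (by simp [a₁, a₃]))

lemma dist_a₁_b₂ : graph.dist a₁ b₂ = (GPinf 3).dist a₁ b₂ :=
  induce_dist_eq_of_walk (.cons adj_a₁_a₂ adj_a₂_b₂.toWalk)
    ((reachable _ _).one_lt_dist_of_ne_of_not_adj (by simp [a₁, b₂]) (by simp [a₁, b₂]))

lemma dist_a₂_b₁ : graph.dist a₂ b₁ = (GPinf 3).dist a₂ b₁ :=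
  induce_dist_eq_of_walk (.cons adj_a₁_a₂.symm adj_a₁_b₁.toWalk)
    ((reachable _ _).one_lt_dist_of_ne_of_not_adj (by simp [a₂, b₁]) (by simp [a₂, b₁]))

lemma dist_a₂_b₃ : graph.dist a₂ b₃ = (GPinf 3).dist a₂ b₃ :=
  induce_dist_eq_of_walk (.cons adj_a₂_a₃ adj_a₃_b₃.toWalk)
    ((reachable _ _).one_lt_dist_of_ne_of_not_adj (by simp [a₂, b₃]) (by simp [a₂, b₃]))

lemma dist_a₃_b₂ : graph.dist a₃ b₂ = (GPinf 3).dist a₃ b₂ :=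
  induce_dist_eq_of_walk (.cons adj_a₂_a₃.symm adj_a₂_b₂.toWalk)
    ((reachable _ _).one_lt_dist_of_ne_of_not_adj (by simp [a₃, b₂]) (by simp [a₃, b₂]))

lemma dist_a₁_b₃ : graph.dist a₁ b₃ = (GPinf 3).dist a₁ b₃ :=
  induce_dist_eq_of_walk (.cons adj_a₁_a₂ (.cons adj_a₂_a₃ adj_a₃_b₃.toWalk))
    ((reachable _ _).three_le_dist_of_color_ne (GPinf.bicoloring ⟨1, rfl⟩) (by decide)
      (by simp [a₁, b₃]))

lemma dist_a₃_b₁ : graph.dist a₃ b₁ = (GPinf 3).dist a₃ b₁ :=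
  induce_dist_eq_of_walk (.cons adj_a₂_a₃.symm (.cons adj_a₁_a₂.symm adj_a₁_b₁.toWalk))
    ((reachable _ _).three_le_dist_of_color_ne (GPinf.bicoloring ⟨1, rfl⟩) (by decide)
      (by simp [a₃, b₁]))

lemma dist_b₁_b₂ : graph.dist b₁ b₂ = (GPinf 3).dist b₁ b₂ :=
  induce_dist_eq_of_walk (.cons adj_a₁_b₁.symm (.cons adj_a₁_a₂ adj_a₂_b₂.toWalk))
    ((reachable _ _).three_le_dist_of_color_ne (GPinf.bicoloring ⟨1, rfl⟩) (by decide)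
      (by simp [b₁, b₂]))

lemma dist_b₂_b₃ : graph.dist b₂ b₃ = (GPinf 3).dist b₂ b₃ :=
  induce_dist_eq_of_walk (.cons adj_a₂_b₂.symm (.cons adj_a₂_a₃ adj_a₃_b₃.toWalk))
    ((reachable _ _).three_le_dist_of_color_ne (GPinf.bicoloring ⟨1, rfl⟩) (by decide)
      (by simp [b₂, b₃]))

lemma commonNeighbors_b₁_b₃ : (GPinf 3).commonNeighbors b₁ b₃ = ∅ := by
  ext (x | x) <;> simp [b₁, b₃, mem_commonNeighbors] <;> omega

lemma dist_b₁_b₃ : graph.dist b₁ b₃ = (GPinf 3).dist b₁ b₃ :=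
  induce_dist_eq_of_walk
    (.cons adj_a₁_b₁.symm (.cons adj_a₁_a₂ (.cons adj_a₂_a₃ adj_a₃_b₃.toWalk)))
    ((reachable _ _).four_le_dist_of_color_eq (GPinf.bicoloring ⟨1, rfl⟩) (by simp [b₁, b₃])
      (by decide) commonNeighbors_b₁_b₃)

theorem dist_eq (u v : threeSpokes) : graph.dist u v = (GPinf 3).dist u v := by
  have h : graph.dist u v = (GPinf 3).dist u v ∨ graph.dist v u = (GPinf 3).dist v u := by
    rcases eq_or u with rfl | rfl | rfl | rfl | rfl | rfl <;>
      rcases eq_or v with rfl | rfl | rfl | rfl | rfl | rfl <;>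
      simp only [dist_self, dist_a₁_a₂, dist_a₂_a₃, dist_a₁_b₁, dist_a₂_b₂, dist_a₃_b₃, dist_a₁_a₃,
        dist_a₁_b₂, dist_a₂_b₁, dist_a₂_b₃, dist_a₃_b₂, dist_a₁_b₃, dist_a₃_b₁, dist_b₁_b₂,
        dist_b₂_b₃, dist_b₁_b₃, true_or, or_true]
  exact h.elim id fun h ↦ by rwa [dist_comm, dist_comm (G := GPinf 3)]

end ThreeSpokes

/-- in `GP(∞,3)`, the subgraph induced on the six vertices
`{a_1, a_2, a_3, b_1, b_2, b_3}` is a tree, and it is an isometric subgraph of `GP(∞,3)`: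
distances between these vertices in the induced subgraph agree with distances in
`GP(∞,3)`. -/
theorem stmt13 :
    ((GPinf 3).induce ({Sum.inl 1, Sum.inl 2, Sum.inl 3, Sum.inr 1, Sum.inr 2, Sum.inr 3} :
      Set (ℤ ⊕ ℤ))).IsTree ∧
    ∀ u v : ({Sum.inl 1, Sum.inl 2, Sum.inl 3, Sum.inr 1, Sum.inr 2, Sum.inr 3} :
        Set (ℤ ⊕ ℤ)),
      ((GPinf 3).induce ({Sum.inl 1, Sum.inl 2, Sum.inl 3, Sum.inr 1, Sum.inr 2, Sum.inr 3} :
        Set (ℤ ⊕ ℤ))).dist u v = (GPinf 3).dist u v :=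
  ⟨⟨ThreeSpokes.connected, ThreeSpokes.isAcyclic⟩, ThreeSpokes.dist_eq⟩
end
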